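/- arXiv:2505.00427 — 2 statements merged into one kernel-verified Lean document; each statement's English description precedes it below -/
import Mathlib

section
/- Explicit decoder achievability for the W-state code. Fix d ≥ 1, n ≥ 2 and 1 ≤ N_e < n, and set m := n − N_e. Model the physical space as (Fin N_e → Fin (d+1)) × (Fin m → Fin (d+1)). Then there exists a quantum channel D : (Fin m → Fin (d+1)) → Fin d such that for every unit vector c : Fin d → ℂ, writing Ψ := ∑ i, c i • w_i^{(n)} for the W-code encoding of c, one has (star c ⬝ᵥ (D (ptrA (Matrix.vecMulVec Ψ (star Ψ)))).mulVec c).re ≥ 1 − (N_e : ℝ)/n; that is, the W-state code on n subsystems is (N_e/n)-correctable under erasure of the first N_e subsystems with a single decoder. -/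
open scoped Kronecker ComplexOrder
open Matrix MeasureTheory

noncomputable section

/-- Choi matrix of a linear map on matrices. -/
def choiMatrix {A B : Type*} [Fintype A] [DecidableEq A] [Fintype B]
    (E : Matrix A A ℂ →ₗ[ℂ] Matrix B B ℂ) : Matrix (A × B) (A × B) ℂ :=
  ∑ i, ∑ j, (Matrix.single i j (1 : ℂ)) ⊗ₖ E (Matrix.single i j 1)

/-- A linear map is a quantum channel if it is trace-preserving and its Choi matrix is PSD. -/
def IsQuantumChannel {A B : Type*} [Fintype A] [DecidableEq A] [Fintype B]
    (E : Matrix A A ℂ →ₗ[ℂ] Matrix B B ℂ) : Prop :=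
  (∀ X, (E X).trace = X.trace) ∧ (choiMatrix E).PosSemidef

/-- A state: positive semidefinite with unit trace. -/
def IsState {S : Type*} [Fintype S] (ρ : Matrix S S ℂ) : Prop := ρ.PosSemidef ∧ ρ.trace = 1

/-- A unit vector. -/
def IsUnitVector {S : Type*} [Fintype S] (ψ : S → ℂ) : Prop := ∑ s, ‖ψ s‖ ^ 2 = 1

/-- The pure state (rank-one projector) of a vector. -/
def pureState {S : Type*} (ψ : S → ℂ) : Matrix S S ℂ := Matrix.vecMulVec ψ (star ψ)

/-- Partial trace over the first factor. -/
def ptrA {A B : Type*} [Fintype A] (M : Matrix (A × B) (A × B) ℂ) : Matrix B B ℂ :=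
  Matrix.of fun b b' => ∑ a, M (a, b) (a, b')

/-- W-code codeword `w_i^{(n)}` on `n` physical subsystems of local dimension `d+1`. -/
def wVec (d n : ℕ) (i : Fin d) : (Fin n → Fin (d + 1)) → ℂ := fun x =>
  if ∃ a : Fin n, x a = Fin.castSucc i ∧ ∀ b, b ≠ a → x b = Fin.last d
    then ((1 / Real.sqrt n : ℝ) : ℂ) else 0

/-- W-code codeword on `Ne + m` subsystems, transported along `Fin (Ne + m) ≃ Fin Ne ⊕ Fin m`
to the split physical space. -/
def wSplit (d Ne m : ℕ) (i : Fin d) :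
    ((Fin Ne → Fin (d + 1)) × (Fin m → Fin (d + 1))) → ℂ := fun x =>
  wVec d (Ne + m) i fun a => Sum.elim x.1 x.2 (finSumFinEquiv.symm a)

/-! Take `A` with the W codewords on the `m` surviving sites as rows. Since `A Aᴴ = 1`,
`X ↦ A X Aᴴ + tr((1 - Aᴴ A) X) σ` is a channel, and its fidelity with `c` is at least
`⟨u, ρ u⟩` for `u = Aᴴ c`, the W encoding of `c` on the survivors. The reduced state is
`ρ = ∑_a |Ψ(a, ·)⟩⟨Ψ(a, ·)|` over configurations `a` of the erased sites; the term where no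
excitation was erased, `a = ⊤⋯⊤`, has `Ψ(a, ·) = √(m/n) u`, so the fidelity is at least
`m/n = 1 - N_e/n`. -/
section Channel

variable {S B : Type*} [Fintype S] [Fintype B]

lemma choiMatrix_apply [DecidableEq S] (E : Matrix S S ℂ →ₗ[ℂ] Matrix B B ℂ) (s s' : S)
    (b b' : B) :
    choiMatrix E (s, b) (s', b') = E (Matrix.single s s' 1) b b' := by
  simp [choiMatrix, Matrix.sum_apply, kroneckerMap_apply, Matrix.single, ite_and]

lemma IsUnitVector.star_dotProduct_self {ψ : S → ℂ} (hψ : IsUnitVector ψ) :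
    star ψ ⬝ᵥ ψ = 1 := by
  rw [← Complex.ofReal_one, ← hψ, Complex.ofReal_sum]
  refine Finset.sum_congr rfl fun s _ => ?_
  rw [Pi.star_apply, Complex.star_def, mul_comm, Complex.mul_conj, Complex.normSq_eq_norm_sq,
    Complex.ofReal_pow]

lemma IsUnitVector.isState_pureState {ψ : S → ℂ} (hψ : IsUnitVector ψ) :
    IsState (pureState ψ) :=
  ⟨posSemidef_vecMulVec_self_star ψ, by
    rw [pureState, trace_vecMulVec, dotProduct_comm, hψ.star_dotProduct_self]⟩

lemma star_conjTranspose_mulVec_dotProduct (A : Matrix B S ℂ) (c : B → ℂ) :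
    star (Aᴴ *ᵥ c) ⬝ᵥ Aᴴ *ᵥ c = star c ⬝ᵥ (A * Aᴴ) *ᵥ c := by
  rw [star_mulVec, conjTranspose_conjTranspose, ← dotProduct_mulVec, mulVec_mulVec]

variable [DecidableEq S]

lemma one_sub_conjTranspose_mul_self_eq [DecidableEq B] (A : Matrix B S ℂ) (hA : A * Aᴴ = 1) :
    1 - Aᴴ * A = (1 - Aᴴ * A)ᴴ * (1 - Aᴴ * A) := by
  have hP : (Aᴴ * A) * (Aᴴ * A) = Aᴴ * A := by
    rw [Matrix.mul_assoc, ← Matrix.mul_assoc A, hA, Matrix.one_mul]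
  simp only [conjTranspose_sub, conjTranspose_one, conjTranspose_mul,
    conjTranspose_conjTranspose, Matrix.sub_mul, Matrix.mul_sub, Matrix.one_mul,
    Matrix.mul_one, hP, sub_self, sub_zero]

def compressionWithReset (A : Matrix B S ℂ) (σ : Matrix B B ℂ) :
    Matrix S S ℂ →ₗ[ℂ] Matrix B B ℂ where
  toFun X := A * X * Aᴴ + ((1 - Aᴴ * A) * X).trace • σ
  map_add' X Y := by
    simp only [Matrix.mul_add, Matrix.add_mul, trace_add, add_smul]
    abel
  map_smul' r X := by
    simp only [Matrix.mul_smul, Matrix.smul_mul, trace_smul, smul_eq_mul, mul_smul,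
      RingHom.id_apply, smul_add]

variable (A : Matrix B S ℂ) (σ : Matrix B B ℂ)

lemma compressionWithReset_apply (X : Matrix S S ℂ) :
    compressionWithReset A σ X = A * X * Aᴴ + ((1 - Aᴴ * A) * X).trace • σ := rfl

lemma trace_compressionWithReset (hσ : σ.trace = 1) (X : Matrix S S ℂ) :
    (compressionWithReset A σ X).trace = X.trace := by
  rw [compressionWithReset_apply, trace_add, trace_smul, hσ, smul_eq_mul, mul_one,
    trace_mul_cycle, Matrix.sub_mul, trace_sub, Matrix.one_mul, add_sub_cancel]

lemma choiMatrix_compressionWithReset :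
    choiMatrix (compressionWithReset A σ) =
      vecMulVec (fun p : S × B => A p.2 p.1) (star fun p : S × B => A p.2 p.1) +
        (1 - Aᴴ * A)ᵀ ⊗ₖ σ := by
  ext ⟨s, b⟩ ⟨s', b'⟩
  rw [choiMatrix_apply, compressionWithReset_apply]
  simp [Matrix.mul_apply, Matrix.single, trace, ite_and, vecMulVec_apply, one_apply, eq_comm,
    mul_comm]

lemma isQuantumChannel_compressionWithReset [DecidableEq B] (hA : A * Aᴴ = 1)
    (hσ : IsState σ) :
    IsQuantumChannel (compressionWithReset A σ) := by
  refine ⟨trace_compressionWithReset A σ hσ.2, ?_⟩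
  have hR : (1 - Aᴴ * A).PosSemidef := by
    rw [one_sub_conjTranspose_mul_self_eq A hA]
    exact posSemidef_conjTranspose_mul_self _
  rw [choiMatrix_compressionWithReset]
  exact (posSemidef_vecMulVec_self_star _).add (hR.transpose.kronecker hσ.1)

lemma le_dotProduct_compressionWithReset [DecidableEq B] (hA : A * Aᴴ = 1) (hσ : σ.PosSemidef)
    {ρ : Matrix S S ℂ} (hρ : ρ.PosSemidef) (c : B → ℂ) :
    star (Aᴴ *ᵥ c) ⬝ᵥ ρ *ᵥ (Aᴴ *ᵥ c) ≤ star c ⬝ᵥ compressionWithReset A σ ρ *ᵥ c := by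
  have hleak : 0 ≤ ((1 - Aᴴ * A) * ρ).trace := by
    rw [one_sub_conjTranspose_mul_self_eq A hA, Matrix.mul_assoc, trace_mul_comm]
    exact (hρ.mul_mul_conjTranspose_same _).trace_nonneg
  have hmain : star c ⬝ᵥ (A * ρ * Aᴴ) *ᵥ c = star (Aᴴ *ᵥ c) ⬝ᵥ ρ *ᵥ (Aᴴ *ᵥ c) := by
    rw [← mulVec_mulVec, ← mulVec_mulVec, dotProduct_mulVec, star_mulVec,
      conjTranspose_conjTranspose]
  rw [compressionWithReset_apply, add_mulVec, dotProduct_add, hmain, smul_mulVec,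
    dotProduct_smul, smul_eq_mul]
  exact le_add_of_nonneg_right (mul_nonneg hleak (hσ.dotProduct_mulVec_nonneg c))

end Channel

section PartialTrace

variable {A B : Type*} [Fintype A]

lemma ptrA_vecMulVec_star (Ψ : A × B → ℂ) :
    ptrA (vecMulVec Ψ (star Ψ)) =
      ∑ a, vecMulVec (fun b => Ψ (a, b)) (star fun b => Ψ (a, b)) := by
  ext b b'
  simp [ptrA, Matrix.sum_apply, vecMulVec_apply]

variable [Fintype B]

lemma posSemidef_ptrA_vecMulVec_star (Ψ : A × B → ℂ) :
    (ptrA (vecMulVec Ψ (star Ψ))).PosSemidef := by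
  rw [ptrA_vecMulVec_star]
  exact posSemidef_sum _ fun a _ => posSemidef_vecMulVec_self_star _

lemma star_dotProduct_vecMulVec_star_mulVec (u v : B → ℂ) :
    star u ⬝ᵥ vecMulVec v (star v) *ᵥ u = ((‖star u ⬝ᵥ v‖ ^ 2 : ℝ) : ℂ) := by
  rw [vecMulVec_mulVec, dotProduct_smul, op_smul_eq_mul, star_dotProduct (v := v),
    Complex.star_def, Complex.mul_conj, Complex.normSq_eq_norm_sq, Complex.ofReal_pow]

lemma norm_sq_le_star_dotProduct_ptrA_mulVec (Ψ : A × B → ℂ) (u : B → ℂ) (a : A) :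
    ((‖star u ⬝ᵥ fun b => Ψ (a, b)‖ ^ 2 : ℝ) : ℂ) ≤
      star u ⬝ᵥ ptrA (vecMulVec Ψ (star Ψ)) *ᵥ u := by
  classical
  simp only [ptrA_vecMulVec_star, sum_mulVec, dotProduct_sum,
    star_dotProduct_vecMulVec_star_mulVec]
  exact Finset.single_le_sum (f := fun a => ((‖star u ⬝ᵥ fun b => Ψ (a, b)‖ ^ 2 : ℝ) : ℂ))
    (fun a _ => by positivity) (Finset.mem_univ a)

end PartialTrace

section WCode

variable {d : ℕ}

def IsSingleExcitation {ι : Type*} (i : Fin d) (x : ι → Fin (d + 1)) : Prop :=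
  ∃ a, x a = Fin.castSucc i ∧ ∀ b, b ≠ a → x b = Fin.last d

def singleExcitation {ι : Type*} [DecidableEq ι] (i : Fin d) (a : ι) : ι → Fin (d + 1) :=
  Function.update (fun _ => Fin.last d) a (Fin.castSucc i)

section Index

variable {ι κ : Type*}

lemma isSingleExcitation_comp_equiv (e : κ ≃ ι) (i : Fin d) (x : ι → Fin (d + 1)) :
    IsSingleExcitation i (x ∘ e) ↔ IsSingleExcitation i x := by
  refine ⟨fun ⟨a, hxa, hx⟩ => ⟨e a, hxa, fun b hb => ?_⟩,
    fun ⟨a, hxa, hx⟩ => ⟨e.symm a, by simpa using hxa, fun b hb => hx _ ?_⟩⟩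
  · simpa using hx (e.symm b) (by rintro rfl; simp at hb)
  · rintro rfl; simp at hb

lemma isSingleExcitation_sum_elim_last (i : Fin d) (x : ι → Fin (d + 1)) :
    IsSingleExcitation i (Sum.elim (fun _ : κ => Fin.last d) x) ↔ IsSingleExcitation i x := by
  constructor
  · rintro ⟨a | a, hxa, hx⟩
    · exact absurd hxa.symm (Fin.castSucc_lt_last i).ne
    · exact ⟨a, hxa, fun b hb => hx (Sum.inr b) (by simpa using hb)⟩
  · rintro ⟨a, hxa, hx⟩
    refine ⟨Sum.inr a, hxa, ?_⟩
    rintro (b | b) hb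
    · rfl
    · exact hx b (by simpa using hb)

variable [DecidableEq ι]

lemma isSingleExcitation_iff_exists_singleExcitation_eq (i : Fin d) (x : ι → Fin (d + 1)) :
    IsSingleExcitation i x ↔ ∃ a, singleExcitation i a = x := by
  constructor
  · rintro ⟨a, hxa, hx⟩
    refine ⟨a, funext fun b => ?_⟩
    by_cases hb : b = a
    · subst hb; simp [singleExcitation, hxa]
    · simp [singleExcitation, hb, hx b hb]
  · rintro ⟨a, rfl⟩
    exact ⟨a, by simp [singleExcitation], fun b hb => by simp [singleExcitation, hb]⟩

lemma singleExcitation_injective (i : Fin d) :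
    Function.Injective fun a : ι => singleExcitation i a := by
  intro a b hab
  by_contra hne
  have := congrFun hab a
  simp [singleExcitation, hne, (Fin.castSucc_lt_last i).ne] at this

lemma isSingleExcitation_singleExcitation_iff (i j : Fin d) (a : ι) :
    IsSingleExcitation j (singleExcitation i a) ↔ i = j := by
  rw [isSingleExcitation_iff_exists_singleExcitation_eq]
  constructor
  · rintro ⟨b, hb⟩
    have := congrFun hb a
    by_cases hab : a = b
    · subst hab; simpa [singleExcitation, eq_comm] using this
    · simp only [singleExcitation, Function.update_of_ne hab, Function.update_self] at this
      exact absurd this.symm (Fin.castSucc_lt_last i).ne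
  · rintro rfl; exact ⟨a, rfl⟩

end Index

open Classical in
lemma wVec_eq_ite {n : ℕ} (i : Fin d) (x : Fin n → Fin (d + 1)) :
    wVec d n i x = if IsSingleExcitation i x then ((1 / Real.sqrt n : ℝ) : ℂ) else 0 := by
  unfold wVec IsSingleExcitation
  congr

lemma sum_wVec_mul {n : ℕ} (i : Fin d) (f : (Fin n → Fin (d + 1)) → ℂ) :
    ∑ x, wVec d n i x * f x = ((1 / Real.sqrt n : ℝ) : ℂ) * ∑ a, f (singleExcitation i a) := by
  classical
  have hsupp : Finset.univ.filter (IsSingleExcitation i) =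
      Finset.univ.map ⟨fun a : Fin n => singleExcitation i a, singleExcitation_injective i⟩ := by
    ext x; simp [isSingleExcitation_iff_exists_singleExcitation_eq]
  simp only [wVec_eq_ite, ite_mul, zero_mul]
  rw [← Finset.sum_filter, hsupp, Finset.sum_map, Finset.mul_sum]
  rfl

lemma wVec_orthonormal {n : ℕ} (hn : n ≠ 0) (i j : Fin d) :
    ∑ x, wVec d n i x * wVec d n j x = if i = j then 1 else 0 := by
  have hsqrt : Real.sqrt n ≠ 0 := by positivity
  rw [sum_wVec_mul]
  simp only [wVec_eq_ite, isSingleExcitation_singleExcitation_iff]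
  split_ifs
  · rw [Finset.sum_const, Finset.card_univ, Fintype.card_fin, nsmul_eq_mul,
      ← Complex.ofReal_natCast, ← Complex.ofReal_mul, ← Complex.ofReal_mul, ← Complex.ofReal_one]
    congr 1
    field_simp
    rw [Real.sq_sqrt (Nat.cast_nonneg _)]
  · simp

def wCodeMatrix (d n : ℕ) : Matrix (Fin d) (Fin n → Fin (d + 1)) ℂ := Matrix.of (wVec d n)

lemma star_wVec {n : ℕ} (i : Fin d) (x : Fin n → Fin (d + 1)) :
    star (wVec d n i x) = wVec d n i x := by
  unfold wVec; split_ifs <;> simp [Complex.conj_ofReal]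

lemma wCodeMatrix_mul_conjTranspose {n : ℕ} (hn : n ≠ 0) :
    wCodeMatrix d n * (wCodeMatrix d n)ᴴ = 1 := by
  ext i j
  simp only [wCodeMatrix, Matrix.mul_apply, conjTranspose_apply, of_apply, star_wVec,
    wVec_orthonormal hn, one_apply]

lemma wSplit_last_left (Ne : ℕ) {m : ℕ} (j : Fin d) (x : Fin m → Fin (d + 1)) :
    wSplit d Ne m j (fun _ => Fin.last d, x) =
      ((Real.sqrt m / Real.sqrt ↑(Ne + m) : ℝ) : ℂ) * wVec d m j x := by
  have hsupp : IsSingleExcitation j (fun a => Sum.elim (fun _ : Fin Ne => Fin.last d) x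
      (finSumFinEquiv.symm a)) ↔ IsSingleExcitation j x :=
    (isSingleExcitation_comp_equiv finSumFinEquiv.symm j _).trans
      (isSingleExcitation_sum_elim_last j x)
  rw [wSplit, wVec_eq_ite, wVec_eq_ite]
  by_cases hx : IsSingleExcitation j x
  · rw [if_pos (hsupp.2 hx), if_pos hx, ← Complex.ofReal_mul]
    obtain ⟨a, -⟩ := hx
    have hsqrt : Real.sqrt m ≠ 0 := by have := a.pos; positivity
    congr 1
    field_simp
  · rw [if_neg (mt hsupp.1 hx), if_neg hx, mul_zero]

lemma sum_smul_wSplit_last_left (Ne : ℕ) {m : ℕ} (c : Fin d → ℂ) :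
    (fun x => (∑ i, c i • wSplit d Ne m i) (fun _ => Fin.last d, x)) =
      ((Real.sqrt m / Real.sqrt ↑(Ne + m) : ℝ) : ℂ) • (wCodeMatrix d m)ᴴ *ᵥ c := by
  ext x
  simp only [Finset.sum_apply, Pi.smul_apply, smul_eq_mul, wSplit_last_left, mulVec,
    dotProduct, conjTranspose_apply, wCodeMatrix, of_apply, star_wVec, Finset.mul_sum]
  exact Finset.sum_congr rfl fun i _ => by ring

end WCode

theorem wcode_explicit_decoder_general
    (d n Ne : ℕ) (hd : 1 ≤ d) (hNen : Ne < n) :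
    ∃ D : Matrix (Fin (n - Ne) → Fin (d + 1)) (Fin (n - Ne) → Fin (d + 1)) ℂ →ₗ[ℂ]
        Matrix (Fin d) (Fin d) ℂ,
      IsQuantumChannel D ∧
      ∀ c : Fin d → ℂ, IsUnitVector c →
        (star c ⬝ᵥ (D (ptrA (Matrix.vecMulVec (∑ i, c i • wSplit d Ne (n - Ne) i)
          (star (∑ i, c i • wSplit d Ne (n - Ne) i))))).mulVec c).re ≥
          1 - (Ne : ℝ) / n := by
  set m := n - Ne
  have hNem : Ne + m = n := by omega
  set A := wCodeMatrix d m
  have hA : A * Aᴴ = 1 := wCodeMatrix_mul_conjTranspose (by omega)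
  have hσ : IsState (pureState (Pi.single (⟨0, hd⟩ : Fin d) (1 : ℂ))) :=
    IsUnitVector.isState_pureState (by simp [IsUnitVector, Pi.single_apply, apply_ite])
  refine ⟨compressionWithReset A _, isQuantumChannel_compressionWithReset A _ hA hσ,
    fun c hc => ?_⟩
  set Ψ := ∑ i, c i • wSplit d Ne m i
  have hu : star (Aᴴ *ᵥ c) ⬝ᵥ Aᴴ *ᵥ c = 1 := by
    rw [star_conjTranspose_mulVec_dotProduct, hA, one_mulVec, hc.star_dotProduct_self]
  have hoverlap :
      ‖star (Aᴴ *ᵥ c) ⬝ᵥ fun b => Ψ (fun _ => Fin.last d, b)‖ ^ 2 = (m / n : ℝ) := by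
    rw [sum_smul_wSplit_last_left, dotProduct_smul, hu, smul_eq_mul, mul_one,
      Complex.norm_real, Real.norm_eq_abs, sq_abs, div_pow, Real.sq_sqrt (by positivity),
      Real.sq_sqrt (by positivity), hNem]
  have hfid := (norm_sq_le_star_dotProduct_ptrA_mulVec Ψ (Aᴴ *ᵥ c) fun _ => Fin.last d).trans
    (le_dotProduct_compressionWithReset A _ hA hσ.1 (posSemidef_ptrA_vecMulVec_star Ψ) c)
  rw [hoverlap] at hfid
  have hm : (m / n : ℝ) = 1 - Ne / n := by
    have hn : (n : ℝ) ≠ 0 := by exact_mod_cast (Nat.zero_le Ne).trans_lt hNen |>.ne'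
    rw [eq_sub_iff_add_eq, ← add_div, div_eq_one_iff_eq hn]
    exact_mod_cast (add_comm m Ne).trans hNem
  exact hm ▸ (Complex.le_def.1 hfid).1

/-- **Explicit decoder achievability for the W-state code.**
There is a single decoding channel recovering every W-code encoded pure state after
erasure of the first `N_e` subsystems with fidelity at least `1 - N_e/n`. -/
theorem wcode_explicit_decoder
    (d n Ne : ℕ) (hd : 1 ≤ d) (hn : 2 ≤ n) (hNe : 1 ≤ Ne) (hNen : Ne < n) :
    ∃ D : Matrix (Fin (n - Ne) → Fin (d + 1)) (Fin (n - Ne) → Fin (d + 1)) ℂ →ₗ[ℂ]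
        Matrix (Fin d) (Fin d) ℂ,
      IsQuantumChannel D ∧
      ∀ c : Fin d → ℂ, IsUnitVector c →
        (star c ⬝ᵥ (D (ptrA (Matrix.vecMulVec (∑ i, c i • wSplit d Ne (n - Ne) i)
          (star (∑ i, c i • wSplit d Ne (n - Ne) i))))).mulVec c).re ≥
          1 - (Ne : ℝ) / n :=
  wcode_explicit_decoder_general d n Ne hd hNen

end
end

section
/- Approximate recovery of almost-pure mixed states. Let L, P, P' be finite types, let E : L → P, N : P → P' and D : P' → L be quantum channels, and let 0 ≤ ε ≤ 1. Suppose that for every unit vector ψ on L, (star ψ ⬝ᵥ (D (N (E (Matrix.vecMulVec ψ (star ψ))))).mulVec ψ).re ≥ 1 − ε. Then for every state ρ on L, Fid(D (N (E ρ)), ρ) ≥ ((ρ * ρ).trace).re · (1 − ε), where Fid is the Uhlmann fidelity Fid(ρ, σ) := (((√(√ρ * σ * √ρ)).trace).re)² defined via positive-semidefinite matrix square roots. -/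
open scoped Kronecker ComplexOrder
open Matrix MeasureTheory

noncomputable section

/-- Square root of a positive semidefinite matrix (junk value `0` if not PSD). -/
def psdSqrt {S : Type*} [Fintype S] [DecidableEq S] (M : Matrix S S ℂ) : Matrix S S ℂ :=
  open Classical in
  if h : M.PosSemidef then
    (h.1.eigenvectorUnitary : Matrix S S ℂ) * diagonal ((↑) ∘ Real.sqrt ∘ h.1.eigenvalues) *
      (star (h.1.eigenvectorUnitary : Matrix S S ℂ)) else 0

/-- Uhlmann fidelity `Fid(ρ, σ) = (tr √(√ρ σ √ρ))²`. -/
def Fid {S : Type*} [Fintype S] [DecidableEq S] (ρ σ : Matrix S S ℂ) : ℝ :=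
  (((psdSqrt (psdSqrt ρ * σ * psdSqrt ρ)).trace).re) ^ 2

/-! Write `ρ = ∑ pᵢ Pᵢ` spectrally, `Pᵢ = |vᵢ⟩⟨vᵢ|`, and `Φ = D ∘ N ∘ E`. A PSD Choi matrix yields a
Kraus decomposition, so `Φ` is a positive map and every term of
`⟨vᵢ|Φ ρ|vᵢ⟩ = ∑ⱼ pⱼ ⟨vᵢ|Φ Pⱼ|vᵢ⟩` is nonnegative; keeping `j = i` gives `⟨vᵢ|Φ ρ|vᵢ⟩ ≥ pᵢ (1 - ε)`,
hence `tr(ρ Φ ρ) = ∑ pᵢ ⟨vᵢ|Φ ρ|vᵢ⟩ ≥ (∑ pᵢ²)(1 - ε) = tr(ρ²)(1 - ε)`. Finally the overlap bounds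
the fidelity: with `M = √σ ρ √σ`, `Fid(σ, ρ) = (tr √M)² ≥ tr M = tr(ρσ)`, since `(∑ λₖ)² ≥ ∑ λₖ²`
for the nonnegative eigenvalues of `√M`. -/

section Sqrt
variable {n : Type*} [Fintype n] [DecidableEq n] {M : Matrix n n ℂ}
open scoped MatrixOrder

theorem psdSqrt_eq_cfcSqrt (hM : M.PosSemidef) : psdSqrt M = CFC.sqrt M := by
  rw [CFC.sqrt_eq_real_sqrt M hM.nonneg, cfcₙ_eq_cfc, hM.1.cfc_eq, psdSqrt, dif_pos hM,
    IsHermitian.cfc, Unitary.conjStarAlgAut_apply]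
  rfl

theorem posSemidef_psdSqrt (hM : M.PosSemidef) : (psdSqrt M).PosSemidef := by
  rw [psdSqrt_eq_cfcSqrt hM, ← nonneg_iff_posSemidef]
  exact CFC.sqrt_nonneg M

theorem psdSqrt_mul_self (hM : M.PosSemidef) : psdSqrt M * psdSqrt M = M := by
  rw [psdSqrt_eq_cfcSqrt hM]
  exact CFC.sqrt_mul_sqrt_self M hM.nonneg

end Sqrt

theorem trace_conjStarAlgAut {𝕜 n : Type*} [RCLike 𝕜] [Fintype n] [DecidableEq n]
    (U : unitary (Matrix n n 𝕜)) (X : Matrix n n 𝕜) :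
    (Unitary.conjStarAlgAut 𝕜 _ U X).trace = X.trace := by
  rw [Unitary.conjStarAlgAut_apply, trace_mul_cycle, Unitary.coe_star_mul_self, one_mul]

theorem Matrix.IsHermitian.trace_mul_self_eq_sum_sq_eigenvalues {𝕜 n : Type*} [RCLike 𝕜]
    [Fintype n] [DecidableEq n] {A : Matrix n n 𝕜} (hA : A.IsHermitian) :
    (A * A).trace = ∑ i, (hA.eigenvalues i : 𝕜) ^ 2 := by
  conv_lhs => rw [hA.spectral_theorem, ← map_mul, trace_conjStarAlgAut]
  simp [diagonal_mul_diagonal, trace_diagonal, sq]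

theorem Matrix.IsHermitian.isUnitVector_eigenvectorBasis {n : Type*} [Fintype n] [DecidableEq n]
    {A : Matrix n n ℂ} (hA : A.IsHermitian) (i : n) : IsUnitVector ⇑(hA.eigenvectorBasis i) := by
  rw [IsUnitVector, ← EuclideanSpace.norm_sq_eq, hA.eigenvectorBasis.orthonormal.1 i, one_pow]

theorem Matrix.IsHermitian.eq_sum_eigenvalues_smul_pureState {n : Type*} [Fintype n]
    [DecidableEq n] {A : Matrix n n ℂ} (hA : A.IsHermitian) :
    A = ∑ i, (hA.eigenvalues i : ℂ) • pureState ⇑(hA.eigenvectorBasis i) := by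
  conv_lhs => rw [hA.spectral_theorem, Unitary.conjStarAlgAut_apply]
  ext a b
  simp [Matrix.mul_apply, Matrix.sum_apply, pureState, Matrix.vecMulVec_apply,
    Matrix.diagonal_apply, Matrix.star_apply]
  exact Finset.sum_congr rfl fun i _ => by ring

theorem Matrix.PosSemidef.exists_eq_sum_smul_pureState {n : Type*} [Fintype n]
    [DecidableEq n] {A : Matrix n n ℂ} (hA : A.PosSemidef) :
    ∃ (p : n → ℝ) (v : n → n → ℂ), (∀ i, 0 ≤ p i) ∧ (∀ i, IsUnitVector (v i)) ∧
      (A * A).trace.re = ∑ i, p i ^ 2 ∧ A = ∑ i, (p i : ℂ) • pureState (v i) := by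
  refine ⟨hA.1.eigenvalues, fun i => ⇑(hA.1.eigenvectorBasis i), hA.eigenvalues_nonneg,
    hA.1.isUnitVector_eigenvectorBasis, ?_, hA.1.eq_sum_eigenvalues_smul_pureState⟩
  rw [hA.1.trace_mul_self_eq_sum_sq_eigenvalues]
  norm_cast

theorem re_trace_mul_self_le_sq_re_trace {n : Type*} [Fintype n] [DecidableEq n]
    {A : Matrix n n ℂ} (hA : A.PosSemidef) : (A * A).trace.re ≤ A.trace.re ^ 2 := by
  set l := hA.1.eigenvalues
  have hl : ∀ i, 0 ≤ l i := hA.eigenvalues_nonneg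
  have htrace : A.trace.re = ∑ i, l i := by
    simp [hA.1.trace_eq_sum_eigenvalues, l]
  have htrace_sq : (A * A).trace.re = ∑ i, l i ^ 2 := by
    rw [hA.1.trace_mul_self_eq_sum_sq_eigenvalues]
    norm_cast
  rw [htrace, htrace_sq, sq, Finset.sum_mul]
  exact Finset.sum_le_sum fun i _ => by
    rw [sq]
    exact mul_le_mul_of_nonneg_left
      (Finset.single_le_sum (fun j _ => hl j) (Finset.mem_univ i)) (hl i)

theorem re_trace_mul_le_fid {n : Type*} [Fintype n] [DecidableEq n] {σ ρ : Matrix n n ℂ}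
    (hσ : σ.PosSemidef) (hρ : ρ.PosSemidef) : (ρ * σ).trace.re ≤ Fid σ ρ := by
  have hM : (psdSqrt σ * ρ * psdSqrt σ).PosSemidef := by
    simpa only [(posSemidef_psdSqrt hσ).1.eq] using
      hρ.mul_mul_conjTranspose_same (psdSqrt σ)
  have htrace : (psdSqrt σ * ρ * psdSqrt σ).trace = (ρ * σ).trace := by
    rw [trace_mul_cycle, psdSqrt_mul_self hσ, trace_mul_comm]
  have key := re_trace_mul_self_le_sq_re_trace (posSemidef_psdSqrt hM)
  rwa [psdSqrt_mul_self hM, htrace] at key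

section Choi
variable {A B : Type*} [Fintype A] [DecidableEq A]

theorem choiMatrix_apply_s19 [Fintype B] (E : Matrix A A ℂ →ₗ[ℂ] Matrix B B ℂ) (a c : A) (b d : B) :
    choiMatrix E (a, b) (c, d) = E (single a c 1) b d := by
  simp [choiMatrix, Matrix.sum_apply, Matrix.kroneckerMap_apply, Matrix.single,
    ite_and, Finset.sum_ite_eq']

theorem map_eq_sum_smul_map_single (E : Matrix A A ℂ →ₗ[ℂ] Matrix B B ℂ) (X : Matrix A A ℂ) :
    E X = ∑ a, ∑ c, X a c • E (single a c 1) := by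
  conv_lhs => rw [matrix_eq_sum_single X]
  simp only [map_sum, ← map_smul, smul_single, smul_eq_mul, mul_one]

theorem exists_kraus_of_posSemidef_choiMatrix [Fintype B] {E : Matrix A A ℂ →ₗ[ℂ] Matrix B B ℂ}
    (hE : (choiMatrix E).PosSemidef) :
    ∃ K : A × B → Matrix B A ℂ, ∀ X, E X = ∑ k, K k * X * (K k)ᴴ := by
  classical
  -- Factor the Choi matrix as `Mᴴ M`; the rows of `M`, reshaped, are the Kraus operators.
  obtain ⟨M, hM⟩ : ∃ M : Matrix (A × B) (A × B) ℂ, choiMatrix E = star M * M := by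
    open scoped MatrixOrder in
    exact CStarAlgebra.nonneg_iff_eq_star_mul_self.mp hE.nonneg
  refine ⟨fun k => of fun b a => star (M k (a, b)), fun X => ?_⟩
  have hsingle : ∀ a c b d, E (single a c 1) b d = ∑ k, star (M k (a, b)) * M k (c, d) := by
    intro a c b d
    rw [← choiMatrix_apply_s19, hM]
    simp [Matrix.mul_apply]
  ext b d
  simp only [map_eq_sum_smul_map_single E X, Matrix.sum_apply, Matrix.smul_apply, hsingle,
    Matrix.mul_apply, conjTranspose_apply, of_apply, star_star, smul_eq_mul, Finset.mul_sum,
    Finset.sum_mul]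
  rw [Finset.sum_comm_cycle]
  refine Finset.sum_congr rfl fun k _ => ?_
  rw [Finset.sum_comm]
  exact Finset.sum_congr rfl fun c _ => Finset.sum_congr rfl fun a _ => by ring

theorem posSemidef_map_of_posSemidef_choiMatrix [Fintype B] {E : Matrix A A ℂ →ₗ[ℂ] Matrix B B ℂ}
    (hE : (choiMatrix E).PosSemidef) {X : Matrix A A ℂ} (hX : X.PosSemidef) :
    (E X).PosSemidef := by
  obtain ⟨K, hK⟩ := exists_kraus_of_posSemidef_choiMatrix hE
  rw [hK]
  exact posSemidef_sum _ fun k _ => hX.mul_mul_conjTranspose_same (K k)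

end Choi

theorem trace_pureState_mul {n : Type*} [Fintype n] (ψ : n → ℂ) (X : Matrix n n ℂ) :
    (pureState ψ * X).trace = star ψ ⬝ᵥ X *ᵥ ψ := by
  simp only [pureState, trace, diag_apply, Matrix.mul_apply, vecMulVec_apply, dotProduct,
    mulVec, Pi.star_apply, Finset.mul_sum]
  rw [Finset.sum_comm]
  exact Finset.sum_congr rfl fun i _ => Finset.sum_congr rfl fun j _ => by ring

theorem sum_sq_mul_le_re_trace_mul_map {n ι : Type*} [Fintype n] [Fintype ι]
    {Φ : Matrix n n ℂ →ₗ[ℂ] Matrix n n ℂ} (hΦ : ∀ X, X.PosSemidef → (Φ X).PosSemidef) {ε : ℝ}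
    (h : ∀ ψ, IsUnitVector ψ → 1 - ε ≤ (star ψ ⬝ᵥ Φ (pureState ψ) *ᵥ ψ).re)
    {p : ι → ℝ} (hp : ∀ i, 0 ≤ p i) {v : ι → n → ℂ} (hv : ∀ i, IsUnitVector (v i))
    {ρ : Matrix n n ℂ} (hρ : ρ = ∑ i, (p i : ℂ) • pureState (v i)) :
    (∑ i, p i ^ 2) * (1 - ε) ≤ (ρ * Φ ρ).trace.re := by
  have hdiag : ∀ i, p i * (1 - ε) ≤ (star (v i) ⬝ᵥ Φ ρ *ᵥ v i).re := by
    intro i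
    have hterm : ∀ j, 0 ≤ p j * (star (v i) ⬝ᵥ Φ (pureState (v j)) *ᵥ v i).re := fun j =>
      mul_nonneg (hp j) ((hΦ _ (posSemidef_vecMulVec_self_star _)).re_dotProduct_nonneg _)
    calc p i * (1 - ε) ≤ p i * (star (v i) ⬝ᵥ Φ (pureState (v i)) *ᵥ v i).re :=
          mul_le_mul_of_nonneg_left (h _ (hv i)) (hp i)
      _ ≤ ∑ j, p j * (star (v i) ⬝ᵥ Φ (pureState (v j)) *ᵥ v i).re :=
          Finset.single_le_sum (fun j _ => hterm j) (Finset.mem_univ i)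
      _ = (star (v i) ⬝ᵥ Φ ρ *ᵥ v i).re := by
          rw [hρ]
          simp [sum_mulVec, dotProduct_sum, smul_mulVec, dotProduct_smul]
  have htrace : (ρ * Φ ρ).trace.re = ∑ i, p i * (star (v i) ⬝ᵥ Φ ρ *ᵥ v i).re := by
    nth_rewrite 1 [hρ]
    simp [Finset.sum_mul, trace_sum, smul_mul, trace_smul, trace_pureState_mul]
  rw [htrace, Finset.sum_mul]
  exact Finset.sum_le_sum fun i _ => by
    rw [sq, mul_assoc]
    exact mul_le_mul_of_nonneg_left (hdiag i) (hp i)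

theorem approximate_recovery_mixed_states_general
    {L P P' : Type*} [Fintype L] [DecidableEq L] [Fintype P] [DecidableEq P]
    [Fintype P'] [DecidableEq P']
    (E : Matrix L L ℂ →ₗ[ℂ] Matrix P P ℂ) (hE : IsQuantumChannel E)
    (N : Matrix P P ℂ →ₗ[ℂ] Matrix P' P' ℂ) (hN : IsQuantumChannel N)
    (D : Matrix P' P' ℂ →ₗ[ℂ] Matrix L L ℂ) (hD : IsQuantumChannel D)
    (ε : ℝ)
    (h : ∀ ψ : L → ℂ, IsUnitVector ψ →
      (star ψ ⬝ᵥ (D (N (E (pureState ψ)))).mulVec ψ).re ≥ 1 - ε)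
    (ρ : Matrix L L ℂ) (hρ : IsState ρ) :
    Fid (D (N (E ρ))) ρ ≥ ((ρ * ρ).trace).re * (1 - ε) := by
  have hΦ : ∀ X : Matrix L L ℂ, X.PosSemidef → (D (N (E X))).PosSemidef := fun _ hX =>
    posSemidef_map_of_posSemidef_choiMatrix hD.2 <|
      posSemidef_map_of_posSemidef_choiMatrix hN.2 <|
        posSemidef_map_of_posSemidef_choiMatrix hE.2 hX
  obtain ⟨p, v, hp, hv, hpurity, hspectral⟩ := hρ.1.exists_eq_sum_smul_pureState
  rw [ge_iff_le, hpurity]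
  exact (sum_sq_mul_le_re_trace_mul_map (Φ := D ∘ₗ N ∘ₗ E) hΦ h hp hv hspectral).trans
    (re_trace_mul_le_fid (hΦ _ hρ.1) hρ.1)

/-- **Approximate recovery of almost-pure mixed states.**
If decoding recovers every pure logical state with fidelity at least `1 - ε`, then every
mixed state `ρ` is recovered with Uhlmann fidelity at least `tr(ρ²)(1 - ε)`. -/
theorem approximate_recovery_mixed_states
    {L P P' : Type*} [Fintype L] [DecidableEq L] [Fintype P] [DecidableEq P]
    [Fintype P'] [DecidableEq P']
    (E : Matrix L L ℂ →ₗ[ℂ] Matrix P P ℂ) (hE : IsQuantumChannel E)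
    (N : Matrix P P ℂ →ₗ[ℂ] Matrix P' P' ℂ) (hN : IsQuantumChannel N)
    (D : Matrix P' P' ℂ →ₗ[ℂ] Matrix L L ℂ) (hD : IsQuantumChannel D)
    (ε : ℝ) (hε0 : 0 ≤ ε) (hε1 : ε ≤ 1)
    (h : ∀ ψ : L → ℂ, IsUnitVector ψ →
      (star ψ ⬝ᵥ (D (N (E (pureState ψ)))).mulVec ψ).re ≥ 1 - ε)
    (ρ : Matrix L L ℂ) (hρ : IsState ρ) :
    Fid (D (N (E ρ))) ρ ≥ ((ρ * ρ).trace).re * (1 - ε) :=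
  approximate_recovery_mixed_states_general E hE N hN D hD ε h ρ hρ

end
end
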